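/- The equivalence relation ≡ on FC = FDE × AC2 whose classes are {Nn}, {Ff, Nf}, {Fn}, {Nt, Tt}, {Bb, Fb, Nb, Tb}, {Bt, Ft}, {Tn}, {Bf, Tf}, {Bn} is a congruence with respect to the FC operations ¬, ∧, ∨ (defined component-wise from FDE and AC2). -/

import Mathlib

inductive FDE : Type
  | B | T | F | N
deriving DecidableEq

instance instFintypeFDE : Fintype FDE :=
  ⟨{FDE.B, FDE.T, FDE.F, FDE.N}, fun x => by cases x <;> simp⟩

def fdeNeg : FDE → FDE
  | .B => .B | .T => .F | .F => .T | .N => .N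

def fdeAnd : FDE → FDE → FDE
  | .B, .B => .B | .B, .T => .B | .B, .F => .F | .B, .N => .F
  | .T, .B => .B | .T, .T => .T | .T, .F => .F | .T, .N => .N
  | .F, _ => .F
  | .N, .B => .F | .N, .T => .N | .N, .F => .F | .N, .N => .N

def fdeOr : FDE → FDE → FDE
  | .B, .B => .B | .B, .T => .T | .B, .F => .B | .B, .N => .T
  | .T, _ => .T
  | .F, .B => .B | .F, .T => .T | .F, .F => .F | .F, .N => .N
  | .N, .B => .T | .N, .T => .T | .N, .F => .N | .N, .N => .N
inductive AC2 : Type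
  | b | t | f | n
deriving DecidableEq

instance instFintypeAC2 : Fintype AC2 :=
  ⟨{AC2.b, AC2.t, AC2.f, AC2.n}, fun x => by cases x <;> simp⟩

def acNeg : AC2 → AC2
  | .b => .b | .t => .f | .f => .t | .n => .n

def acAnd : AC2 → AC2 → AC2
  | .b, _ => .b
  | _, .b => .b
  | .n, x => x
  | x, .n => x
  | .t, .t => .t
  | .f, .f => .f
  | .t, .f => .b
  | .f, .t => .b

def acOr : AC2 → AC2 → AC2
  | .b, _ => .b
  | _, .b => .b
  | .n, x => x
  | x, .n => x
  | .t, .t => .t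
  | .f, .f => .f
  | .t, .f => .b
  | .f, .t => .b
abbrev FC := FDE × AC2

def fcNeg (v : FC) : FC := (fdeNeg v.1, acNeg v.2)
def fcAnd (x y : FC) : FC := (fdeAnd x.1 y.1, acAnd x.2 y.2)
def fcOr (x y : FC) : FC := (fdeOr x.1 y.1, acOr x.2 y.2)
def fcDes (v : FC) : Bool :=
  decide ((v.1 = FDE.T ∨ v.1 = FDE.B) ∧ (v.2 = AC2.f ∨ v.2 = AC2.n))
/-- The index of the congruence class of a value of `FC`, with classes
{Nn}, {Ff,Nf}, {Fn}, {Nt,Tt}, {Bb,Fb,Nb,Tb}, {Bt,Ft}, {Tn}, {Bf,Tf}, {Bn}. -/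
def classOf : FC → Fin 9
  | (FDE.N, AC2.n) => 0
  | (FDE.F, AC2.f) => 1
  | (FDE.N, AC2.f) => 1
  | (FDE.F, AC2.n) => 2
  | (FDE.N, AC2.t) => 3
  | (FDE.T, AC2.t) => 3
  | (_, AC2.b) => 4
  | (FDE.B, AC2.t) => 5
  | (FDE.F, AC2.t) => 5
  | (FDE.T, AC2.n) => 6
  | (FDE.B, AC2.f) => 7
  | (FDE.T, AC2.f) => 7
  | (FDE.B, AC2.n) => 8

/-- The equivalence relation on `FC` whose classes are the nine sets above. -/
def fcRel (x y : FC) : Prop := classOf x = classOf y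

/- `fcRel` is the kernel of `classOf`, so it is a congruence as soon as the class of `¬x`, `x ∧ y`
and `x ∨ y` depends only on the classes of `x` and `y`. That is a finite check: compare each value
with the one computed from fixed representatives of the classes. -/

theorem eq_of_comp_factors {α β : Type*} {q : α → β} {f : α → α} (g : β → β)
    (hg : ∀ x, q (f x) = g (q x)) {x₁ x₂ : α} (hx : q x₁ = q x₂) : q (f x₁) = q (f x₂) := by
  rw [hg, hg, hx]

theorem eq_of_comp_factors₂ {α β : Type*} {q : α → β} {f : α → α → α} (g : β → β → β)
    (hg : ∀ x y, q (f x y) = g (q x) (q y)) {x₁ x₂ y₁ y₂ : α} (hx : q x₁ = q x₂)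
    (hy : q y₁ = q y₂) : q (f x₁ y₁) = q (f x₂ y₂) := by
  rw [hg, hg, hx, hy]

def classRep : Fin 9 → FC :=
  ![(.N, .n), (.F, .f), (.F, .n), (.T, .t), (.B, .b), (.B, .t), (.T, .n), (.B, .f), (.B, .n)]

theorem classOf_fcNeg (x : FC) : classOf (fcNeg x) = classOf (fcNeg (classRep (classOf x))) := by
  revert x; decide

theorem classOf_fcAnd (x y : FC) :
    classOf (fcAnd x y) = classOf (fcAnd (classRep (classOf x)) (classRep (classOf y))) := by
  revert x y; decide

theorem classOf_fcOr (x y : FC) :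
    classOf (fcOr x y) = classOf (fcOr (classRep (classOf x)) (classRep (classOf y))) := by
  revert x y; decide

/-- The relation ≡ with the nine listed classes is a congruence of FC. -/
theorem fcRel_congruence :
    Equivalence fcRel ∧
    (∀ x y, fcRel x y → fcRel (fcNeg x) (fcNeg y)) ∧
    (∀ x₁ x₂ y₁ y₂, fcRel x₁ x₂ → fcRel y₁ y₂ → fcRel (fcAnd x₁ y₁) (fcAnd x₂ y₂)) ∧
    (∀ x₁ x₂ y₁ y₂, fcRel x₁ x₂ → fcRel y₁ y₂ → fcRel (fcOr x₁ y₁) (fcOr x₂ y₂)) :=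
  ⟨(Setoid.ker classOf).iseqv,
    fun _ _ => eq_of_comp_factors (fun i => classOf (fcNeg (classRep i))) classOf_fcNeg,
    fun _ _ _ _ => eq_of_comp_factors₂ (fun i j => classOf (fcAnd (classRep i) (classRep j)))
      classOf_fcAnd,
    fun _ _ _ _ => eq_of_comp_factors₂ (fun i j => classOf (fcOr (classRep i) (classRep j)))
      classOf_fcOr⟩
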